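/- arXiv:1005.3504 — 4 statements merged into one kernel-verified Lean document; each statement's English description precedes it below -/
import Mathlib

section
/- Let $q_1, q_2 > 1$ be real and $\lambda$ real with $\lambda^2 - q_1 - q_2 > 2\sqrt{q_1 q_2}$. Write the two (real, distinct, positive) roots of $1 - (\lambda^2 - q_1 - q_2)u + q_1 q_2 u^2$ as $(q_1 q_2)^{-s_1}$ and $(q_1 q_2)^{-s_2}$ with $s_1, s_2 \in \mathbb{R}$. If moreover $\lambda^2 < (q_1+1)(q_2+1)$, then $s_1, s_2 \in (0,1)$ and $s_1, s_2 \neq 1/2$. -/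
/-!
Put `Q = q₁q₂`, `c = λ² - q₁ - q₂` and `u = Q^(-s)`. The identity
`1 - c u + Q u² = (1 - u)(1 - Q u) + (Q + 1 - c) u`, together with `c < Q + 1`
(which is `λ² < (q₁ + 1)(q₂ + 1)`), forces `(1 - u)(1 - Q u) < 0` at a positive root,
i.e. `Q⁻¹ < u < 1`, i.e. `0 < s < 1`. At `s = 1/2` we would have `Q u² = 1`, so the
equation reads `c u = 2 = 2 √Q u`, contradicting `c > 2 √Q`.
-/

open Real

lemma quadratic_root_mem_Ioo {Q c u : ℝ} (hQ : 1 < Q) (hc : c < Q + 1) (hu : 0 < u)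
    (hroot : 1 - c * u + Q * u ^ 2 = 0) : u ∈ Set.Ioo Q⁻¹ 1 := by
  have hneg : (1 - u) * (1 - Q * u) < 0 := by
    nlinarith [mul_pos (sub_pos.mpr hc) hu]
  rcases mul_neg_iff.mp hneg with ⟨hu1, hQu⟩ | ⟨hu1, hQu⟩
  · exact ⟨(inv_lt_iff_one_lt_mul₀ (by linarith)).mpr (by linarith), by linarith⟩
  · nlinarith

lemma rpow_neg_mem_Ioo_inv_one_iff {Q s : ℝ} (hQ : 1 < Q) :
    Q ^ (-s) ∈ Set.Ioo Q⁻¹ 1 ↔ s ∈ Set.Ioo 0 1 := by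
  have hQ0 : 0 < Q := by linarith
  rw [← rpow_neg_one, ← rpow_zero Q]
  simp only [Set.mem_Ioo, rpow_lt_rpow_left_iff hQ]
  constructor <;> rintro ⟨h₁, h₂⟩ <;> constructor <;> linarith

lemma quadratic_root_ne_inv_sqrt {Q c u : ℝ} (hQ : 0 < Q) (hc : 2 * √Q < c)
    (hroot : 1 - c * u + Q * u ^ 2 = 0) : u ≠ (√Q)⁻¹ := by
  rintro rfl
  have hsqrt : 0 < √Q := sqrt_pos.mpr hQ
  rw [inv_pow, sq_sqrt hQ.le, mul_inv_cancel₀ hQ.ne'] at hroot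
  have : c = 2 * √Q := by field_simp at hroot; linarith
  linarith

/-- If `q1, q2 > 1`, `lam^2 - q1 - q2 > 2 √(q1 q2)` and
`lam^2 < (q1+1)(q2+1)`, then any real `s` such that `(q1 q2)^(-s)` is a root of
`1 - (lam^2 - q1 - q2) u + q1 q2 u^2` satisfies `s ∈ (0,1)` and `s ≠ 1/2`. -/
theorem stmt2 (q1 q2 lam : ℝ) (h1 : 1 < q1) (h2 : 1 < q2)
    (hbig : 2 * Real.sqrt (q1 * q2) < lam ^ 2 - q1 - q2)
    (hsmall : lam ^ 2 < (q1 + 1) * (q2 + 1)) :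
    ∀ s : ℝ,
      1 - (lam ^ 2 - q1 - q2) * (q1 * q2) ^ (-s)
          + q1 * q2 * ((q1 * q2) ^ (-s)) ^ 2 = 0 →
      0 < s ∧ s < 1 ∧ s ≠ 1 / 2 := by
  intro s hroot
  have hQ : 1 < q1 * q2 := one_lt_mul_of_lt_of_le h1 h2.le
  have hc : lam ^ 2 - q1 - q2 < q1 * q2 + 1 := by linarith
  obtain ⟨hs0, hs1⟩ := (rpow_neg_mem_Ioo_inv_one_iff hQ).mp
    (quadratic_root_mem_Ioo hQ hc (rpow_pos_of_pos (by linarith) _) hroot)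
  refine ⟨hs0, hs1, ?_⟩
  rintro rfl
  exact quadratic_root_ne_inv_sqrt (by linarith) hbig hroot
    (by rw [sqrt_eq_rpow, rpow_neg (by linarith)])
end

section
/- For a complex number $\nu$, the $2\times 2$ matrices $T = \begin{pmatrix} q^{\lambda} & 0 \\ 0 & -1 \end{pmatrix}$ and $\theta = \frac{1}{q^{\lambda}+1}\begin{pmatrix} q^{\lambda-\nu}+q^{\lambda+\nu}+c & q^{\lambda-\nu}-q^{\nu}+c \\ q^{-\nu}-q^{\lambda+\nu}-c & q^{-\nu}+q^{\nu}-c \end{pmatrix}$, where $c = q^{(\lambda+\lambda^*)/2} - q^{(\lambda-\lambda^*)/2}$, satisfy $T^2 = (q^{\lambda}-1)T + q^{\lambda}$ and $\theta T - T\theta^{-1} = (q^{\lambda}-1)\theta + c$; moreover the eigenvalues of $\theta$ are $q^{\nu}$ and $q^{-\nu}$. -/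
/-!
Put `z = q^ν` and `Q = q^λ`. Then `θ = (Q + 1)⁻¹ • M`, where the matrix `M` has trace
`(Q + 1)(z + z⁻¹)` and determinant `(Q + 1)²`, so `θ` has trace `z + z⁻¹` and determinant `1`,
which gives its characteristic polynomial. Since `det θ = 1`, the inverse `θ⁻¹` is the adjugate
of `θ`, and the relation `θT - Tθ⁻¹ = (Q - 1)θ + c` becomes an identity between polynomials in
the entries, valid for every `z` (and every `c`).
-/

open Matrix Polynomial

section FinTwo

variable {R : Type*} [CommRing R]

theorem Matrix.inv_eq_adjugate_of_det_eq_one {n : Type*} [Fintype n] [DecidableEq n]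
    {A : Matrix n n R} (h : A.det = 1) : A⁻¹ = adjugate A := by
  rw [inv_def, h, Ring.inverse_one, one_smul]

theorem Matrix.charpoly_fin_two_eq_of_trace_of_det [Nontrivial R]
    {A : Matrix (Fin 2) (Fin 2) R} {a b : R} (htr : A.trace = a + b) (hdet : A.det = a * b) :
    A.charpoly = (X - C a) * (X - C b) := by
  rw [charpoly_fin_two, htr, hdet, map_add, map_mul]; ring

end FinTwo

namespace AffineHecke

variable {K : Type*} [Field K]

def heckeT (Q : K) : Matrix (Fin 2) (Fin 2) K := !![Q, 0; 0, -1]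

def thetaCore (Q c z : K) : Matrix (Fin 2) (Fin 2) K :=
  !![Q * z⁻¹ + Q * z + c, Q * z⁻¹ - z + c; z⁻¹ - Q * z - c, z⁻¹ + z - c]

theorem heckeT_sq (Q : K) : heckeT Q ^ 2 = (Q - 1) • heckeT Q + Q • 1 := by
  ext i j; fin_cases i <;> fin_cases j <;> simp [heckeT, sq]; ring

theorem trace_thetaCore (Q c z : K) : (thetaCore Q c z).trace = (Q + 1) * (z + z⁻¹) := by
  rw [thetaCore, trace_fin_two_of]; ring

theorem det_thetaCore (Q c : K) {z : K} (hz : z ≠ 0) : (thetaCore Q c z).det = (Q + 1) ^ 2 := by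
  rw [thetaCore, det_fin_two_of]; field_simp; ring

theorem thetaCore_mul_heckeT_sub_heckeT_mul_adjugate (Q c z : K) :
    thetaCore Q c z * heckeT Q - heckeT Q * adjugate (thetaCore Q c z)
      = (Q - 1) • thetaCore Q c z + ((Q + 1) * c) • 1 := by
  rw [thetaCore, heckeT, adjugate_fin_two_of]
  ext i j; fin_cases i <;> fin_cases j <;> simp <;> ring

def principalTheta (Q c z : K) : Matrix (Fin 2) (Fin 2) K := (Q + 1)⁻¹ • thetaCore Q c z

variable {Q : K} (c : K) {z : K}

theorem det_principalTheta (hQ : Q + 1 ≠ 0) (hz : z ≠ 0) : (principalTheta Q c z).det = 1 := by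
  rw [principalTheta, det_smul, det_thetaCore Q c hz, Fintype.card_fin, inv_pow,
    inv_mul_cancel₀ (pow_ne_zero 2 hQ)]

theorem inv_principalTheta (hQ : Q + 1 ≠ 0) (hz : z ≠ 0) :
    (principalTheta Q c z)⁻¹ = (Q + 1)⁻¹ • adjugate (thetaCore Q c z) := by
  rw [inv_eq_adjugate_of_det_eq_one (det_principalTheta c hQ hz), principalTheta, adjugate_smul,
    Fintype.card_fin, pow_one]

theorem principalTheta_mul_heckeT_sub_heckeT_mul_inv (hQ : Q + 1 ≠ 0) (hz : z ≠ 0) :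
    principalTheta Q c z * heckeT Q - heckeT Q * (principalTheta Q c z)⁻¹
      = (Q - 1) • principalTheta Q c z + c • 1 := by
  rw [inv_principalTheta c hQ hz, principalTheta, smul_mul_assoc, mul_smul_comm, ← smul_sub,
    thetaCore_mul_heckeT_sub_heckeT_mul_adjugate, smul_add, smul_comm (Q + 1)⁻¹ (Q - 1),
    smul_smul (Q + 1)⁻¹, inv_mul_cancel_left₀ hQ]

theorem charpoly_principalTheta (hQ : Q + 1 ≠ 0) (hz : z ≠ 0) :
    (principalTheta Q c z).charpoly = (X - C z) * (X - C z⁻¹) := by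
  refine charpoly_fin_two_eq_of_trace_of_det ?_
    (by rw [det_principalTheta c hQ hz, mul_inv_cancel₀ hz])
  rw [principalTheta, trace_smul, trace_thetaCore, smul_eq_mul, inv_mul_cancel_left₀ hQ]

end AffineHecke

open AffineHecke in
theorem stmt10_general (q lam lamstar : ℝ) (nu : ℂ) :
    let qp : ℂ → ℂ := fun z => Complex.exp (z * (Real.log q : ℂ))
    let Q : ℂ := qp (lam : ℂ)
    let c : ℂ := qp (((lam + lamstar) / 2 : ℝ) : ℂ) - qp (((lam - lamstar) / 2 : ℝ) : ℂ)
    let T : Matrix (Fin 2) (Fin 2) ℂ := !![Q, 0; 0, -1]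
    let th : Matrix (Fin 2) (Fin 2) ℂ :=
      (Q + 1)⁻¹ •
        !![qp ((lam : ℂ) - nu) + qp ((lam : ℂ) + nu) + c,
             qp ((lam : ℂ) - nu) - qp nu + c;
           qp (-nu) - qp ((lam : ℂ) + nu) - c,
             qp (-nu) + qp nu - c]
    T ^ 2 = (Q - 1) • T + Q • (1 : Matrix (Fin 2) (Fin 2) ℂ) ∧
    th * T - T * th⁻¹ = (Q - 1) • th + c • (1 : Matrix (Fin 2) (Fin 2) ℂ) ∧
    th.charpoly = (Polynomial.X - Polynomial.C (qp nu)) *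
      (Polynomial.X - Polynomial.C (qp (-nu))) := by
  intro qp Q c T th
  have qp_add (x y : ℂ) : qp (x + y) = qp x * qp y := by simp only [qp, add_mul, Complex.exp_add]
  have qp_neg (x : ℂ) : qp (-x) = (qp x)⁻¹ := by simp only [qp, neg_mul, Complex.exp_neg]
  have hz : qp nu ≠ 0 := Complex.exp_ne_zero _
  have hQ : Q + 1 ≠ 0 := by
    have hQ_real : Q = (Real.exp (lam * Real.log q) : ℂ) := by
      simp only [Q, qp, Complex.ofReal_exp, Complex.ofReal_mul]
    rw [hQ_real]
    exact_mod_cast (by positivity : Real.exp (lam * Real.log q) + 1 ≠ 0)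
  have hth : th = principalTheta Q c (qp nu) := by
    simp only [th, principalTheta, thetaCore, sub_eq_add_neg (lam : ℂ), qp_add, qp_neg]
    rfl
  have hT : T = heckeT Q := rfl
  rw [hth, hT, qp_neg]
  exact ⟨heckeT_sq Q, principalTheta_mul_heckeT_sub_heckeT_mul_inv c hQ hz,
    charpoly_principalTheta c hQ hz⟩

/-- The explicit `2 × 2` matrices of the principal series `X(ν)` of
the rank-one affine Hecke algebra satisfy the quadratic and commutation relations,
and the eigenvalues of `θ` are `q^ν` and `q^(-ν)` (stated via the characteristic
polynomial). Here `q^z = exp(z log q)` for complex `z`. -/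
theorem stmt10 (q lam lamstar : ℝ) (hq : 1 < q)
    (h0 : 0 < lamstar) (hl : lamstar < lam) (nu : ℂ) :
    let qp : ℂ → ℂ := fun z => Complex.exp (z * (Real.log q : ℂ))
    let Q : ℂ := qp (lam : ℂ)
    let c : ℂ := qp (((lam + lamstar) / 2 : ℝ) : ℂ) - qp (((lam - lamstar) / 2 : ℝ) : ℂ)
    let T : Matrix (Fin 2) (Fin 2) ℂ := !![Q, 0; 0, -1]
    let th : Matrix (Fin 2) (Fin 2) ℂ :=
      (Q + 1)⁻¹ •
        !![qp ((lam : ℂ) - nu) + qp ((lam : ℂ) + nu) + c,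
             qp ((lam : ℂ) - nu) - qp nu + c;
           qp (-nu) - qp ((lam : ℂ) + nu) - c,
             qp (-nu) + qp nu - c]
    T ^ 2 = (Q - 1) • T + Q • (1 : Matrix (Fin 2) (Fin 2) ℂ) ∧
    th * T - T * th⁻¹ = (Q - 1) • th + c • (1 : Matrix (Fin 2) (Fin 2) ℂ) ∧
    th.charpoly = (Polynomial.X - Polynomial.C (qp nu)) *
      (Polynomial.X - Polynomial.C (qp (-nu))) :=
  stmt10_general q lam lamstar nu
end

section
/- The principal series module $X(\nu)$ of the rank-one affine Hecke algebra (as a 2-dimensional representation with $T$ and $\theta$ acting by the explicit matrices above) is reducible if and only if $q^{\nu} \in \{ q^{\pm(\lambda+\lambda^*)/2},\; -q^{\pm(\lambda-\lambda^*)/2} \}$, i.e., $\nu \in \{ \pm\frac{\lambda+\lambda^*}{2},\; \pm\frac{\lambda-\lambda^*}{2} + \frac{\pi i}{\log q} \}$ modulo $2\pi i / \log q$. -/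
/-!
Since `T` is diagonal with distinct eigenvalues `q^λ` and `-1`, a nonzero proper subspace
stable under `T` is one of the two coordinate lines, and the coordinate line `ℂ eᵢ` is stable
under `θ` iff the off-diagonal entry of `θ` in column `i` vanishes. Writing `x = q^ν`,
`a = q^((λ+λ*)/2)`, `b = q^((λ-λ*)/2)`, so that `q^λ = ab`, these entries are
`-(x - a)(x + b)/x` and `-(ax - 1)(bx + 1)/x` up to the unit `(q^λ + 1)⁻¹`.
-/

open Matrix

section CoordinateLines

variable {R : Type*} [CommSemiring R] {ι : Type*} [DecidableEq ι]

theorem span_single_one_ne_top [Nontrivial R] {i j : ι} (hij : i ≠ j) :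
    R ∙ (Pi.single i 1 : ι → R) ≠ ⊤ := by
  intro h
  obtain ⟨c, hc⟩ := Submodule.mem_span_singleton.1 (h ▸ Submodule.mem_top : Pi.single j 1 ∈ _)
  simpa [hij.symm] using congrFun hc j

variable [Fintype ι]

theorem mulVec_single_one_eq_smul (A : Matrix ι ι R) {i : ι} (h : ∀ j ≠ i, A j i = 0) :
    A *ᵥ Pi.single i 1 = A i i • Pi.single i 1 := by
  ext j
  by_cases hj : j = i
  · subst hj; simp
  · simp [h j hj, hj]

theorem mulVec_mem_span_single_one (A : Matrix ι ι R) {i : ι} (h : ∀ j ≠ i, A j i = 0)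
    {v : ι → R} (hv : v ∈ R ∙ Pi.single i 1) : A *ᵥ v ∈ R ∙ Pi.single i 1 := by
  obtain ⟨c, rfl⟩ := Submodule.mem_span_singleton.1 hv
  rw [mulVec_smul, mulVec_single_one_eq_smul A h]
  exact Submodule.smul_mem _ _ (Submodule.smul_mem _ _ (Submodule.mem_span_singleton_self _))

theorem eq_top_of_forall_single_one_mem {W : Submodule R (ι → R)}
    (h : ∀ i, Pi.single i 1 ∈ W) : W = ⊤ := by
  rw [eq_top_iff, ← (Pi.basisFun R ι).span_eq, Submodule.span_le]
  rintro _ ⟨i, rfl⟩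
  simpa using h i

end CoordinateLines

section TwoByTwo

variable {K : Type*} [Field K]

theorem single_one_mem_of_diagonal_invariant {d : Fin 2 → K} (hd : d 0 ≠ d 1)
    {W : Submodule K (Fin 2 → K)} (hW : ∀ v ∈ W, diagonal d *ᵥ v ∈ W) {v : Fin 2 → K}
    (hv : v ∈ W) {i j : Fin 2} (hij : i ≠ j) (hvi : v i ≠ 0) : Pi.single i 1 ∈ W := by
  have hdij : d i - d j ≠ 0 := by
    fin_cases i <;> fin_cases j <;> simp_all [sub_eq_zero, Ne.symm hd]
  -- `diagonal d - d j` kills the `j`-th coordinate of `v` and scales the `i`-th one.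
  have key : (v i * (d i - d j))⁻¹ • (diagonal d *ᵥ v - d j • v) = Pi.single i 1 := by
    ext k
    simp only [Pi.smul_apply, Pi.sub_apply, mulVec_diagonal, smul_eq_mul, Pi.single_apply]
    fin_cases i <;> fin_cases j <;> fin_cases k <;> simp_all <;> field_simp
  rw [← key]
  exact W.smul_mem _ (W.sub_mem (hW v hv) (W.smul_mem _ hv))

theorem exists_invariant_submodule_diagonal_iff {d : Fin 2 → K} (hd : d 0 ≠ d 1)
    (A : Matrix (Fin 2) (Fin 2) K) :
    (∃ W : Submodule K (Fin 2 → K), W ≠ ⊥ ∧ W ≠ ⊤ ∧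
        (∀ v ∈ W, diagonal d *ᵥ v ∈ W) ∧ (∀ v ∈ W, A *ᵥ v ∈ W)) ↔
      A 1 0 = 0 ∨ A 0 1 = 0 := by
  have other : ∀ {i j k : Fin 2}, i ≠ j → k ≠ i → k = j := by
    intro i j k; fin_cases i <;> fin_cases j <;> fin_cases k <;> simp
  constructor
  · rintro ⟨W, hbot, htop, hT, hA⟩
    have hcol : ∀ {i j : Fin 2}, i ≠ j → Pi.single i 1 ∈ W → A j i = 0 := by
      intro i j hij hi
      by_contra hji
      have hj : Pi.single j 1 ∈ W :=
        single_one_mem_of_diagonal_invariant hd hT (hA _ hi) hij.symm (by simpa using hji)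
      refine htop (eq_top_of_forall_single_one_mem fun k => ?_)
      by_cases hk : k = i
      · exact hk ▸ hi
      · exact other hij hk ▸ hj
    obtain ⟨v, hvW, hv0⟩ := W.ne_bot_iff.1 hbot
    obtain ⟨i, hvi⟩ : ∃ i, v i ≠ 0 := Function.ne_iff.1 hv0
    fin_cases i
    · exact .inl (hcol zero_ne_one (single_one_mem_of_diagonal_invariant hd hT hvW zero_ne_one hvi))
    · exact .inr (hcol one_ne_zero (single_one_mem_of_diagonal_invariant hd hT hvW one_ne_zero hvi))
  · have line : ∀ {i j : Fin 2}, i ≠ j → A j i = 0 → ∃ W : Submodule K (Fin 2 → K), W ≠ ⊥ ∧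
        W ≠ ⊤ ∧ (∀ v ∈ W, diagonal d *ᵥ v ∈ W) ∧ (∀ v ∈ W, A *ᵥ v ∈ W) := by
      intro i j hij hA
      refine ⟨K ∙ Pi.single i 1, by simp, span_single_one_ne_top hij,
        fun v => mulVec_mem_span_single_one _ fun k hk => ?_,
        fun v => mulVec_mem_span_single_one _ fun k hk => other hij hk ▸ hA⟩
      exact diagonal_apply_ne _ hk
    rintro (h | h)
    · exact line zero_ne_one h
    · exact line one_ne_zero h

theorem div_sub_add_sub_eq_zero_iff {x a b : K} (hx : x ≠ 0) :
    a * b / x - x + (a - b) = 0 ↔ x = a ∨ x = -b := by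
  have : a * b / x - x + (a - b) = -((x - a) * (x + b)) / x := by field_simp; ring
  rw [this, div_eq_zero_iff, neg_eq_zero, mul_eq_zero, sub_eq_zero, add_eq_zero_iff_eq_neg]
  simp [hx]

theorem inv_sub_mul_sub_sub_eq_zero_iff {x a b : K} (hx : x ≠ 0) :
    x⁻¹ - a * b * x - (a - b) = 0 ↔ x = a⁻¹ ∨ x = -b⁻¹ := by
  have h := div_sub_add_sub_eq_zero_iff (a := a) (b := b) (inv_ne_zero hx)
  rw [inv_eq_iff_eq_inv, inv_eq_iff_eq_inv, inv_neg, div_inv_eq_mul] at h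
  rw [← h, ← neg_eq_zero]
  ring_nf

end TwoByTwo

theorem stmt11_general (q lam lamstar : ℝ) (nu : ℂ) :
    let qp : ℂ → ℂ := fun z => Complex.exp (z * (Real.log q : ℂ))
    let Q : ℂ := qp (lam : ℂ)
    let c : ℂ := qp (((lam + lamstar) / 2 : ℝ) : ℂ) - qp (((lam - lamstar) / 2 : ℝ) : ℂ)
    let T : Matrix (Fin 2) (Fin 2) ℂ := !![Q, 0; 0, -1]
    let th : Matrix (Fin 2) (Fin 2) ℂ :=
      (Q + 1)⁻¹ •
        !![qp ((lam : ℂ) - nu) + qp ((lam : ℂ) + nu) + c,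
             qp ((lam : ℂ) - nu) - qp nu + c;
           qp (-nu) - qp ((lam : ℂ) + nu) - c,
             qp (-nu) + qp nu - c]
    (∃ W : Submodule ℂ (Fin 2 → ℂ), W ≠ ⊥ ∧ W ≠ ⊤ ∧
        (∀ v ∈ W, T.mulVec v ∈ W) ∧ (∀ v ∈ W, th.mulVec v ∈ W)) ↔
      (qp nu = qp (((lam + lamstar) / 2 : ℝ) : ℂ) ∨
       qp nu = qp (-(((lam + lamstar) / 2 : ℝ) : ℂ)) ∨
       qp nu = -qp (((lam - lamstar) / 2 : ℝ) : ℂ) ∨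
       qp nu = -qp (-(((lam - lamstar) / 2 : ℝ) : ℂ))) := by
  intro qp Q c T th
  have qp_add : ∀ z w, qp (z + w) = qp z * qp w := fun z w => by
    simp only [qp, add_mul, Complex.exp_add]
  have qp_neg : ∀ z, qp (-z) = (qp z)⁻¹ := fun z => by
    simp only [qp, neg_mul, Complex.exp_neg]
  set a := qp (((lam + lamstar) / 2 : ℝ) : ℂ)
  set b := qp (((lam - lamstar) / 2 : ℝ) : ℂ)
  have hQ : Q = a * b := by
    rw [← qp_add]; show qp _ = qp _; congr 1; push_cast; ring
  have hQ1 : Q + 1 ≠ 0 := by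
    have : Q = (Real.exp (lam * Real.log q) : ℂ) := by simp [Q, qp]
    rw [this]
    exact_mod_cast (by positivity : (0 : ℝ) < Real.exp (lam * Real.log q) + 1).ne'
  have hT : T = diagonal ![Q, -1] := by
    ext i j; fin_cases i <;> fin_cases j <;> rfl
  rw [hT, exists_invariant_submodule_diagonal_iff (by simpa [eq_neg_iff_add_eq_zero] using hQ1)]
  simp only [th, Matrix.smul_apply, smul_eq_mul, mul_eq_zero, inv_eq_zero, hQ1, false_or]
  simp only [of_apply, cons_val', cons_val_zero, cons_val_one, empty_val', cons_val_fin_one]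
  have hc : c = a - b := rfl
  have hlm : qp (lam - nu) = a * b / qp nu := by
    rw [sub_eq_add_neg, qp_add, qp_neg, div_eq_mul_inv, ← hQ]
  have hlp : qp (lam + nu) = a * b * qp nu := by rw [qp_add, ← hQ]
  rw [hc, hlm, hlp, qp_neg nu, inv_sub_mul_sub_sub_eq_zero_iff (Complex.exp_ne_zero _),
    div_sub_add_sub_eq_zero_iff (Complex.exp_ne_zero _), qp_neg, qp_neg]
  tauto

/-- The principal series `X(ν)` (the 2-dimensional representation of
the rank-one affine Hecke algebra given by the explicit matrices `T`, `θ`) is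
reducible — i.e. admits a nonzero proper invariant subspace — iff
`q^ν ∈ {q^((λ+λ*)/2), q^(-(λ+λ*)/2), -q^((λ-λ*)/2), -q^(-(λ-λ*)/2)}`. -/
theorem stmt11 (q lam lamstar : ℝ) (hq : 1 < q)
    (h0 : 0 < lamstar) (hl : lamstar < lam) (nu : ℂ) :
    let qp : ℂ → ℂ := fun z => Complex.exp (z * (Real.log q : ℂ))
    let Q : ℂ := qp (lam : ℂ)
    let c : ℂ := qp (((lam + lamstar) / 2 : ℝ) : ℂ) - qp (((lam - lamstar) / 2 : ℝ) : ℂ)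
    let T : Matrix (Fin 2) (Fin 2) ℂ := !![Q, 0; 0, -1]
    let th : Matrix (Fin 2) (Fin 2) ℂ :=
      (Q + 1)⁻¹ •
        !![qp ((lam : ℂ) - nu) + qp ((lam : ℂ) + nu) + c,
             qp ((lam : ℂ) - nu) - qp nu + c;
           qp (-nu) - qp ((lam : ℂ) + nu) - c,
             qp (-nu) + qp nu - c]
    (∃ W : Submodule ℂ (Fin 2 → ℂ), W ≠ ⊥ ∧ W ≠ ⊤ ∧
        (∀ v ∈ W, T.mulVec v ∈ W) ∧ (∀ v ∈ W, th.mulVec v ∈ W)) ↔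
      (qp nu = qp (((lam + lamstar) / 2 : ℝ) : ℂ) ∨
       qp nu = qp (-(((lam + lamstar) / 2 : ℝ) : ℂ)) ∨
       qp nu = -qp (((lam - lamstar) / 2 : ℝ) : ℂ) ∨
       qp nu = -qp (-(((lam - lamstar) / 2 : ℝ) : ℂ))) :=
  stmt11_general q lam lamstar nu
end

section
/- Let $q_1, q_2 > 1$ be real and $\lambda \in \mathbb{R}$ with $\lambda^2 < (q_1+1)(q_2+1)$ and $\lambda^2 - q_1 - q_2 < -2\sqrt{q_1 q_2}$. Then the quadratic $1 - (\lambda^2 - q_1 - q_2)u + q_1 q_2 u^2$ has two distinct negative real roots, neither of which equals $-(q_1 q_2)^{-1/2}$, and each root $u_0$ satisfies $(q_1 q_2)^{-1} < |u_0| < 1$ with $|u_0| \neq (q_1 q_2)^{-1/2}$. -/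
/-!
Write `a = q1 q2` and `b = λ² - q1 - q2`. Since `b < -2√a`, the discriminant `b² - 4a` is
positive, so there are two distinct real roots. A root `u` satisfies
`u (a + b + 1) = (a u + 1)(u + 1)`, and `a + b + 1 = λ² + (q1 - 1)(q2 - 1) > 0`, so any root
(necessarily negative, as `b < 0`) lies strictly between `-1` and `-1/a`. Finally `-1/√a` is a
root only when `b = -2√a`.
-/

theorem exists_ne_quadratic_eq_zero_of_discrim_pos {a b c : ℝ} (ha : a ≠ 0)
    (hd : 0 < discrim a b c) :
    ∃ x y : ℝ, x ≠ y ∧ a * (x * x) + b * x + c = 0 ∧ a * (y * y) + b * y + c = 0 := by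
  set s := √(discrim a b c)
  have hs : discrim a b c = s * s := (Real.mul_self_sqrt hd.le).symm
  have hs0 : s ≠ 0 := (Real.sqrt_pos.mpr hd).ne'
  refine ⟨(-b + s) / (2 * a), (-b - s) / (2 * a), ?_,
    (quadratic_eq_zero_iff ha hs _).mpr (.inl rfl), (quadratic_eq_zero_iff ha hs _).mpr (.inr rfl)⟩
  rw [Ne, div_left_inj' (mul_ne_zero two_ne_zero ha)]
  intro h
  exact hs0 (by linarith)

section ReciprocalQuadratic

variable {a b u : ℝ}

theorem neg_of_one_sub_mul_add_mul_sq_eq_zero (ha : 0 < a) (hb : b < 0)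
    (hu : 1 - b * u + a * u ^ 2 = 0) : u < 0 := by
  by_contra! h
  nlinarith [mul_nonpos_of_nonpos_of_nonneg hb.le h, mul_nonneg ha.le (sq_nonneg u)]

theorem mem_Ioo_of_one_sub_mul_add_mul_sq_eq_zero (ha : 1 < a) (hb : b < 0)
    (hab : 0 < a + b + 1) (hu : 1 - b * u + a * u ^ 2 = 0) : u ∈ Set.Ioo (-1) (-a⁻¹) := by
  have hu0 := neg_of_one_sub_mul_add_mul_sq_eq_zero (by linarith) hb hu
  have hfactor : (a * u + 1) * (u + 1) < 0 := by
    have : (a * u + 1) * (u + 1) = u * (a + b + 1) := by linear_combination hu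
    rw [this]
    exact mul_neg_of_neg_of_pos hu0 hab
  have hlt : -1 < u := by
    by_contra! h
    have hua : a * u + 1 < 0 := by nlinarith
    exact hfactor.not_ge (mul_nonneg_of_nonpos_of_nonpos hua.le (by linarith))
  have hua : a * u + 1 < 0 := neg_of_mul_neg_left hfactor (by linarith)
  refine ⟨hlt, ?_⟩
  rw [lt_neg, inv_lt_iff_one_lt_mul₀' (by linarith)]
  linarith

theorem ne_neg_inv_sqrt_of_one_sub_mul_add_mul_sq_eq_zero (ha : 0 < a) (hb : b ≠ -(2 * √a))
    (hu : 1 - b * u + a * u ^ 2 = 0) : u ≠ -(√a)⁻¹ := by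
  rintro rfl
  have hs : √a * (√a)⁻¹ = 1 := mul_inv_cancel₀ (Real.sqrt_pos.mpr ha).ne'
  have hsq : a * ((√a)⁻¹) ^ 2 = 1 := by
    rw [inv_pow, Real.sq_sqrt ha.le, mul_inv_cancel₀ ha.ne']
  apply hb
  linear_combination √a * hu - √a * hsq - b * hs

end ReciprocalQuadratic

theorem stmt19_general (q1 q2 lam : ℝ) (h1 : 1 < q1) (h2 : 1 < q2)
    (hb : lam ^ 2 - q1 - q2 < -(2 * Real.sqrt (q1 * q2))) :
    (∃ u1 u2 : ℝ, u1 ≠ u2 ∧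
      1 - (lam ^ 2 - q1 - q2) * u1 + q1 * q2 * u1 ^ 2 = 0 ∧
      1 - (lam ^ 2 - q1 - q2) * u2 + q1 * q2 * u2 ^ 2 = 0) ∧
    ∀ u : ℝ, 1 - (lam ^ 2 - q1 - q2) * u + q1 * q2 * u ^ 2 = 0 →
      u < 0 ∧ u ≠ -((q1 * q2) ^ (-(1 : ℝ) / 2)) ∧
      (q1 * q2)⁻¹ < |u| ∧ |u| < 1 ∧ |u| ≠ (q1 * q2) ^ (-(1 : ℝ) / 2) := by
  have ha : 1 < q1 * q2 := one_lt_mul_of_lt_of_le h1 h2.le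
  have hb0 : lam ^ 2 - q1 - q2 < 0 := by linarith [Real.sqrt_nonneg (q1 * q2)]
  have hab : 0 < q1 * q2 + (lam ^ 2 - q1 - q2) + 1 := by
    have : 0 < (q1 - 1) * (q2 - 1) := mul_pos (by linarith) (by linarith)
    linarith [sq_nonneg lam]
  have hrpow : (q1 * q2) ^ (-(1 : ℝ) / 2) = (√(q1 * q2))⁻¹ := by
    rw [neg_div, Real.rpow_neg (by linarith), ← Real.sqrt_eq_rpow]
  refine ⟨?_, fun u hu => ?_⟩
  · have hd : 0 < discrim (q1 * q2) (-(lam ^ 2 - q1 - q2)) 1 := by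
      rw [discrim]
      nlinarith [Real.sq_sqrt (show 0 ≤ q1 * q2 by linarith), Real.sqrt_nonneg (q1 * q2)]
    obtain ⟨x, y, hxy, hx, hy⟩ := exists_ne_quadratic_eq_zero_of_discrim_pos (by linarith) hd
    exact ⟨x, y, hxy, by linear_combination hx, by linear_combination hy⟩
  obtain ⟨hgt_neg_one, hlt_neg_inv⟩ := mem_Ioo_of_one_sub_mul_add_mul_sq_eq_zero ha hb0 hab hu
  have hne := ne_neg_inv_sqrt_of_one_sub_mul_add_mul_sq_eq_zero (by linarith) hb.ne hu
  have hu0 := neg_of_one_sub_mul_add_mul_sq_eq_zero (by linarith) hb0 hu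
  rw [hrpow, abs_of_neg hu0]
  exact ⟨hu0, hne, by linarith, by linarith, fun h => hne (by linarith)⟩

/-- For `q1, q2 > 1` and real `lam` with `lam² < (q1+1)(q2+1)` and
`lam² - q1 - q2 < -2√(q1 q2)`, the quadratic `1 - (lam² - q1 - q2)u + q1 q2 u²`
has two distinct (necessarily real, negative) roots, none equal to
`-(q1 q2)^{-1/2}`, and each root `u` satisfies `(q1 q2)⁻¹ < |u| < 1` with
`|u| ≠ (q1 q2)^{-1/2}`. -/
theorem stmt19 (q1 q2 lam : ℝ) (h1 : 1 < q1) (h2 : 1 < q2)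
    (hs : lam ^ 2 < (q1 + 1) * (q2 + 1))
    (hb : lam ^ 2 - q1 - q2 < -(2 * Real.sqrt (q1 * q2))) :
    (∃ u1 u2 : ℝ, u1 ≠ u2 ∧
      1 - (lam ^ 2 - q1 - q2) * u1 + q1 * q2 * u1 ^ 2 = 0 ∧
      1 - (lam ^ 2 - q1 - q2) * u2 + q1 * q2 * u2 ^ 2 = 0) ∧
    ∀ u : ℝ, 1 - (lam ^ 2 - q1 - q2) * u + q1 * q2 * u ^ 2 = 0 →
      u < 0 ∧ u ≠ -((q1 * q2) ^ (-(1 : ℝ) / 2)) ∧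
      (q1 * q2)⁻¹ < |u| ∧ |u| < 1 ∧ |u| ≠ (q1 * q2) ^ (-(1 : ℝ) / 2) :=
  stmt19_general q1 q2 lam h1 h2 hb
end
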